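/- Let Y_1, …, Y_m be i.i.d. isotropic log-concave random vectors in ℝ^n, let A = (A_{ij}) be a deterministic m×n real matrix, and set X_{ij} = A_{ij} Y_{ij}, with rows X_i = (X_{ij})_{j≤n}. Then there exists a universal constant C > 0 such that for all p, q ≥ 2, sup_{t ∈ ℝ^n, ‖t‖_{p'} ≤ 1} ( Σ_{i=1}^m 𝔼 |⟨X_i, t⟩|^q )^{1/q} ≤ C · q · max_{j≤n} ‖A^{(j)}‖_q, where p' is the Hölder conjugate of p, ⟨·,·⟩ is the standard inner product on ℝ^n, and A^{(j)} is the j-th column of A. -/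

import Mathlib

open MeasureTheory ProbabilityTheory Real
open scoped Pointwise

noncomputable section

/-- The `ℓ_r` norm of a vector indexed by a finite type. -/
def pNorm {ι : Type*} [Fintype ι] (r : ℝ) (x : ι → ℝ) : ℝ :=
  (∑ k, |x k| ^ r) ^ (1 / r)

/-- The operator norm of an `m × n` matrix from `ℓ_{p'}^n` to `ℓ_q^m`. -/
def opNorm {m n : ℕ} (p' q : ℝ) (A : Fin m → Fin n → ℝ) : ℝ :=
  sSup {c : ℝ | ∃ t : Fin n → ℝ, pNorm p' t ≤ 1 ∧ c = pNorm q (fun i => ∑ j, A i j * t j)}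

/-- A random vector is log-concave if
`P(Z ∈ λK + (1-λ)L) ≥ P(Z ∈ K)^λ P(Z ∈ L)^(1-λ)` for all compact nonempty `K, L`. -/
def IsLogConcave {Ω ι : Type*} [MeasurableSpace Ω] [Fintype ι] (P : Measure Ω)
    (Z : Ω → (ι → ℝ)) : Prop :=
  ∀ K L : Set (ι → ℝ), K.Nonempty → L.Nonempty → IsCompact K → IsCompact L →
    ∀ lam : ℝ, lam ∈ Set.Icc (0 : ℝ) 1 →
      P {ω | Z ω ∈ K} ^ lam * P {ω | Z ω ∈ L} ^ (1 - lam) ≤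
        P {ω | Z ω ∈ lam • K + (1 - lam) • L}

/-- A random vector is isotropic if it is centred and its covariance matrix is the identity. -/
def IsIsotropic {Ω ι : Type*} [MeasurableSpace Ω] [Fintype ι] [DecidableEq ι] (P : Measure Ω)
    (Z : Ω → (ι → ℝ)) : Prop :=
  (∀ i, ∫ ω, Z ω i ∂P = 0) ∧
    ∀ i j, ∫ ω, Z ω i * Z ω j ∂P = if i = j then 1 else 0

/-- A random vector is unconditional if flipping the signs of any subset of its coordinates
does not change its distribution. -/
def IsUnconditional {Ω ι : Type*} [MeasurableSpace Ω] [Fintype ι] (P : Measure Ω)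
    (Z : Ω → (ι → ℝ)) : Prop :=
  ∀ η : ι → ℝ, (∀ k, η k = 1 ∨ η k = -1) →
    IdentDistrib Z (fun ω k => η k * Z ω k) P P

/-- Membership in the unit ball of the dual norm of `ℓ_p`, i.e. `‖t‖_{p'} ≤ 1` where
`p'` is the Hölder conjugate of `p` (this also makes sense for `p = 1`, where `p' = ∞`). -/
def inDualBall {ι : Type*} [Fintype ι] (p : ℝ) (t : ι → ℝ) : Prop :=
  ∀ x : ι → ℝ, pNorm p x ≤ 1 → |∑ i, t i * x i| ≤ 1

/-! Borell's lemma drives the proof. If `Y` is log-concave and `ℓ` is linear, the defining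
inequality with weight `2 / (t + 1)` combines `{|ℓ| ≥ t a}` and `{|ℓ| ≤ a}` inside `{|ℓ| ≥ a}`.
For `a = 2σ`, where `σ² ≥ 𝔼 ℓ(Y)²`, Chebyshev gives `ℙ(|ℓ(Y)| ≥ a) ≤ 1/4`, and the inequality
then forces `ℙ(|ℓ(Y)| ≥ t a) ≤ exp (-(t + 1) / 2)`. Integrating this exponential tail gives
`𝔼 |ℓ(Y)|^q ≤ (16 q σ)^q`.

Row `i` is `ℓ = ⟨(A i j * t j)_j, ·⟩` applied to an isotropic `Y i`, so
`σ² = ∑ j, t j² A i j²`. Because `p' ≤ 2`, we have `∑ j, t j² ≤ ‖t‖_{p'}² ≤ 1`, and Jensen's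
inequality gives `σ^q ≤ ∑ j, t j² |A i j|^q`. Summing over `i` turns the inner sums into
column norms, each at most `max_j ‖A^{(j)}‖_q^q`.
-/

open Set Filter Topology

theorem Real.rpow_sum_mul_le_sum_mul_rpow {ι : Type*} (s : Finset ι) {w f : ι → ℝ}
    (hw : ∀ i, 0 ≤ w i) (hf : ∀ i, 0 ≤ f i) (hw1 : ∑ i ∈ s, w i ≤ 1) {r : ℝ} (hr : 1 ≤ r) :
    (∑ i ∈ s, w i * f i) ^ r ≤ ∑ i ∈ s, w i * f i ^ r := by
  have hr0 : 0 < r := by linarith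
  have hwf : 0 ≤ ∑ i ∈ s, w i * f i ^ r :=
    Finset.sum_nonneg fun i _ => mul_nonneg (hw i) (Real.rpow_nonneg (hf i) r)
  rw [← Real.le_rpow_inv_iff_of_pos (Finset.sum_nonneg fun i _ => mul_nonneg (hw i) (hf i)) hwf hr0]
  calc ∑ i ∈ s, w i * f i
      ≤ (∑ i ∈ s, w i) ^ (1 - r⁻¹) * (∑ i ∈ s, w i * f i ^ r) ^ r⁻¹ :=
        Real.inner_le_weight_mul_Lp_of_nonneg s hr w f hw hf
    _ ≤ (∑ i ∈ s, w i * f i ^ r) ^ r⁻¹ := by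
        refine mul_le_of_le_one_left (Real.rpow_nonneg hwf _) (Real.rpow_le_one
          (Finset.sum_nonneg fun i _ => hw i) hw1 ?_)
        simpa using inv_le_one_of_one_le₀ hr

theorem pNorm_nonneg {ι : Type*} [Fintype ι] (r : ℝ) (x : ι → ℝ) : 0 ≤ pNorm r x :=
  Real.rpow_nonneg (Finset.sum_nonneg fun _ _ => Real.rpow_nonneg (abs_nonneg _) r) _

theorem pNorm_rpow {ι : Type*} [Fintype ι] {r : ℝ} (hr : r ≠ 0) (x : ι → ℝ) :
    pNorm r x ^ r = ∑ k, |x k| ^ r := by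
  rw [pNorm, one_div, Real.rpow_inv_rpow
    (Finset.sum_nonneg fun _ _ => Real.rpow_nonneg (abs_nonneg _) r) hr]

theorem sum_sq_le_one_of_pNorm_le_one {ι : Type*} [Fintype ι] {r : ℝ} (hr0 : 0 < r)
    (hr2 : r ≤ 2) {x : ι → ℝ} (hx : pNorm r x ≤ 1) : ∑ k, x k ^ 2 ≤ 1 := by
  have hsum : ∑ k, |x k| ^ r ≤ 1 := by
    rw [← pNorm_rpow hr0.ne']
    exact Real.rpow_le_one (pNorm_nonneg r x) hx hr0.le
  refine le_trans (Finset.sum_le_sum fun k _ => ?_) hsum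
  have hk : |x k| ^ r ≤ 1 := le_trans (Finset.single_le_sum
    (fun i _ => Real.rpow_nonneg (abs_nonneg (x i)) r) (Finset.mem_univ k)) hsum
  have hk1 : |x k| ≤ 1 := by
    by_contra! h
    exact hk.not_gt (Real.one_lt_rpow h hr0)
  rw [← sq_abs, ← Real.rpow_natCast]
  exact Real.rpow_le_rpow_of_exponent_ge' (abs_nonneg _) hk1 hr0.le (by exact_mod_cast hr2)

theorem pos_and_le_two_of_one_div_add_one_div_eq_one {p p' : ℝ} (hp : 2 ≤ p)
    (hpp' : 1 / p + 1 / p' = 1) : 0 < p' ∧ p' ≤ 2 := by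
  have h : 1 / 2 ≤ 1 / p' := by
    have := one_div_le_one_div_of_le (by norm_num : (0:ℝ) < 2) hp
    linarith
  have hp' : 0 < p' := one_div_pos.mp (lt_of_lt_of_le (by norm_num) h)
  exact ⟨hp', (one_div_le_one_div two_pos hp').mp h⟩

theorem sum_sum_sq_mul_abs_rpow_le_iSup_pNorm_rpow {κ ι : Type*} [Fintype κ] [Fintype ι]
    (A : κ → ι → ℝ) {t : ι → ℝ} (ht : ∑ j, t j ^ 2 ≤ 1) {q : ℝ} (hq : 0 < q) :
    ∑ i, ∑ j, t j ^ 2 * |A i j| ^ q ≤ (⨆ j, pNorm q fun i => A i j) ^ q := by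
  set S := ⨆ j, pNorm q fun i => A i j
  have hcol : ∀ j, ∑ i, |A i j| ^ q ≤ S ^ q := fun j => by
    rw [← pNorm_rpow hq.ne']
    exact Real.rpow_le_rpow (pNorm_nonneg q _)
      (le_ciSup (f := fun j => pNorm q fun i => A i j) (Set.finite_range _).bddAbove j) hq.le
  calc ∑ i, ∑ j, t j ^ 2 * |A i j| ^ q = ∑ j, t j ^ 2 * ∑ i, |A i j| ^ q := by
        rw [Finset.sum_comm]
        simp_rw [Finset.mul_sum]
    _ ≤ ∑ j, t j ^ 2 * S ^ q := by gcongr with j; exact hcol j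
    _ = (∑ j, t j ^ 2) * S ^ q := (Finset.sum_mul _ _ _).symm
    _ ≤ S ^ q :=
        mul_le_of_le_one_left (Real.rpow_nonneg (Real.iSup_nonneg fun j => pNorm_nonneg _ _) _) ht

theorem Real.rpow_sub_one_le_mul_exp {c q u : ℝ} (hc : 0 < c) (hq : 1 ≤ q) (hu : 0 ≤ u) :
    u ^ (q - 1) ≤ (2 * q / c) ^ (q - 1) * exp (c / 2 * u) := by
  have hq0 : 0 < q := by linarith
  set x := c * u / (2 * q)
  have hx : 0 ≤ x := by positivity
  have hux : u = 2 * q / c * x := by simp only [x]; field_simp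
  rw [hux, Real.mul_rpow (by positivity) hx]
  gcongr
  calc x ^ (q - 1) ≤ exp x ^ (q - 1) :=
        Real.rpow_le_rpow hx ((le_add_of_nonneg_right zero_le_one).trans (add_one_le_exp x))
          (by linarith)
    _ = exp (x * (q - 1)) := (Real.exp_mul x _).symm
    _ ≤ exp (c / 2 * (2 * q / c * x)) := by
        rw [exp_le_exp, show c / 2 * (2 * q / c * x) = x * q by field_simp]
        nlinarith

theorem measureReal_le_integral_sq_div_sq {Ω : Type*} [MeasurableSpace Ω] {P : Measure Ω}
    {W : Ω → ℝ} (hW : Integrable (fun ω => W ω ^ 2) P) {a : ℝ} (ha : 0 < a) :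
    P.real {ω | a ≤ |W ω|} ≤ (∫ ω, W ω ^ 2 ∂P) / a ^ 2 := by
  have hset : {ω | a ^ 2 ≤ W ω ^ 2} = {ω | a ≤ |W ω|} := by
    ext ω
    simp only [mem_ofPred_eq, sq_le_sq, abs_of_pos ha]
  rw [le_div_iff₀ (by positivity), mul_comm, ← hset]
  exact mul_meas_ge_le_integral_of_nonneg (ae_of_all _ fun ω => sq_nonneg (W ω)) hW _

theorem integral_abs_rpow_le_of_measureReal_le_exp {Ω : Type*} [MeasurableSpace Ω]
    {P : Measure Ω} [IsFiniteMeasure P] {W : Ω → ℝ} (hW : AEMeasurable W P) {C c q : ℝ}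
    (hC : 0 ≤ C) (hc : 0 < c) (hq : 1 ≤ q)
    (htail : ∀ u > 0, P.real {ω | u ≤ |W ω|} ≤ C * exp (-(c * u))) :
    ∫ ω, |W ω| ^ q ∂P ≤ C * (2 * q / c) ^ q := by
  have hq0 : 0 < q := by linarith
  have hbound : ∀ u ∈ Ioi (0 : ℝ), P {ω | u ≤ |W ω|} * ENNReal.ofReal (u ^ (q - 1)) ≤
      ENNReal.ofReal (C * (2 * q / c) ^ (q - 1) * exp (-(c / 2) * u)) := by
    intro u hu
    rw [← ENNReal.ofReal_toReal (measure_ne_top P _), ← ENNReal.ofReal_mul ENNReal.toReal_nonneg]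
    refine ENNReal.ofReal_le_ofReal ?_
    calc P.real {ω | u ≤ |W ω|} * u ^ (q - 1)
        ≤ C * exp (-(c * u)) * ((2 * q / c) ^ (q - 1) * exp (c / 2 * u)) :=
          mul_le_mul (htail u hu) (Real.rpow_sub_one_le_mul_exp hc hq (le_of_lt hu))
            (Real.rpow_nonneg (le_of_lt hu) _) (mul_nonneg hC (exp_pos _).le)
      _ = C * (2 * q / c) ^ (q - 1) * exp (-(c / 2) * u) := by
          rw [mul_mul_mul_comm, ← exp_add]
          ring_nf
  have hexp : IntegrableOn (fun u => C * (2 * q / c) ^ (q - 1) * exp (-(c / 2) * u)) (Ioi 0) :=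
    (exp_neg_integrableOn_Ioi 0 (by positivity)).const_mul _
  rw [integral_eq_lintegral_of_nonneg_ae (ae_of_all _ fun ω => by positivity)
    (hW.abs.pow_const q).aestronglyMeasurable]
  refine ENNReal.toReal_le_of_le_ofReal (by positivity) ?_
  calc ∫⁻ ω, ENNReal.ofReal (|W ω| ^ q) ∂P
      = ENNReal.ofReal q * ∫⁻ u in Ioi 0, P {ω | u ≤ |W ω|} * ENNReal.ofReal (u ^ (q - 1)) :=
        lintegral_rpow_eq_lintegral_meas_le_mul P (ae_of_all _ fun ω => abs_nonneg _) hW.abs hq0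
    _ ≤ ENNReal.ofReal q *
          ∫⁻ u in Ioi 0, ENNReal.ofReal (C * (2 * q / c) ^ (q - 1) * exp (-(c / 2) * u)) :=
        mul_le_mul_right (setLIntegral_mono' measurableSet_Ioi hbound) _
    _ = ENNReal.ofReal (q * (C * (2 * q / c) ^ (q - 1) * (2 / c))) := by
        rw [← ofReal_integral_eq_lintegral_ofReal hexp (ae_of_all _ fun u => by positivity),
          integral_const_mul, integral_exp_mul_Ioi (by linarith) 0, ← ENNReal.ofReal_mul hq0.le]
        congr 2
        simp only [mul_zero, exp_zero]
        field_simp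
    _ = ENNReal.ofReal (C * (2 * q / c) ^ q) := by
        rw [Real.rpow_sub_one (by positivity)]
        congr 1
        field_simp

theorem smul_add_smul_subset_abs_ge {E : Type*} [AddCommGroup E] [Module ℝ E] (ℓ : E →ₗ[ℝ] ℝ)
    {a t : ℝ} (ht : 1 ≤ t) :
    (2 / (t + 1)) • {x | t * a ≤ |ℓ x|} + (1 - 2 / (t + 1)) • {x | |ℓ x| ≤ a} ⊆
      {x | a ≤ |ℓ x|} := by
  rintro _ ⟨_, ⟨u, hu, rfl⟩, _, ⟨v, hv, rfl⟩, rfl⟩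
  have hu : t * a ≤ |ℓ u| := hu
  have hv : |ℓ v| ≤ a := hv
  have ht1 : 0 < t + 1 := by linarith
  have hlam : 0 ≤ 1 - 2 / (t + 1) := by rw [sub_nonneg, div_le_one ht1]; linarith
  simp only [mem_ofPred_eq, map_add, map_smul, smul_eq_mul]
  calc a = 2 / (t + 1) * (t * a) - (1 - 2 / (t + 1)) * a := by field_simp; ring
    _ ≤ 2 / (t + 1) * |ℓ u| - (1 - 2 / (t + 1)) * |ℓ v| := by gcongr
    _ ≤ |2 / (t + 1) * ℓ u + (1 - 2 / (t + 1)) * ℓ v| := by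
        have := abs_sub_abs_le_abs_sub (2 / (t + 1) * ℓ u) (-((1 - 2 / (t + 1)) * ℓ v))
        rwa [abs_neg, abs_mul, abs_mul, abs_of_pos (by positivity), abs_of_nonneg hlam,
          sub_neg_eq_add] at this

section LogConcave

variable {Ω ι : Type*} [MeasurableSpace Ω] [Fintype ι] {P : Measure Ω} {Z : Ω → ι → ℝ}

theorem tendsto_measure_mem_inter_closedBall (P : Measure Ω) (Z : Ω → ι → ℝ) (K : Set (ι → ℝ)) :
    Tendsto (fun M : ℕ => P {ω | Z ω ∈ K ∩ Metric.closedBall 0 M}) atTop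
      (𝓝 (P {ω | Z ω ∈ K})) := by
  have hmono : Monotone fun M : ℕ => {ω | Z ω ∈ K ∩ Metric.closedBall 0 M} :=
    fun M N h ω hω => ⟨hω.1, Metric.closedBall_subset_closedBall (Nat.cast_le.mpr h) hω.2⟩
  have hunion : ⋃ M : ℕ, {ω | Z ω ∈ K ∩ Metric.closedBall 0 M} = {ω | Z ω ∈ K} := by
    ext ω
    simp only [mem_iUnion, mem_ofPred_eq, mem_inter_iff, exists_and_left, and_iff_left_iff_imp]
    exact fun _ => (exists_nat_ge ‖Z ω‖).imp fun M hM => by simpa using hM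
  exact hunion ▸ tendsto_measure_iUnion_atTop hmono

theorem IsLogConcave.le_measure_smul_add_smul_of_isClosed [IsFiniteMeasure P]
    (hZ : IsLogConcave P Z) {K L : Set (ι → ℝ)} (hK : IsClosed K) (hL : IsClosed L)
    (hKne : K.Nonempty) (hLne : L.Nonempty) {lam : ℝ} (hlam : lam ∈ Icc (0 : ℝ) 1) :
    P {ω | Z ω ∈ K} ^ lam * P {ω | Z ω ∈ L} ^ (1 - lam) ≤
      P {ω | Z ω ∈ lam • K + (1 - lam) • L} := by
  have hfin : ∀ (S : Set (ι → ℝ)) {e : ℝ}, 0 ≤ e → P {ω | Z ω ∈ S} ^ e ≠ ⊤ :=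
    fun S e he => ENNReal.rpow_ne_top_of_nonneg he (measure_ne_top _ _)
  have hlim := ENNReal.Tendsto.mul ((ENNReal.continuous_rpow_const.tendsto _).comp
      (tendsto_measure_mem_inter_closedBall P Z K)) (Or.inr (hfin L (sub_nonneg.mpr hlam.2)))
    ((ENNReal.continuous_rpow_const.tendsto _).comp (tendsto_measure_mem_inter_closedBall P Z L))
    (Or.inr (hfin K hlam.1))
  refine le_of_tendsto hlim ?_
  obtain ⟨x, hx⟩ := hKne
  obtain ⟨y, hy⟩ := hLne
  filter_upwards [eventually_ge_atTop ⌈max ‖x‖ ‖y‖⌉₊] with M hM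
  have hxM : x ∈ Metric.closedBall (0 : ι → ℝ) M := by
    simpa using (le_max_left _ _).trans ((Nat.le_ceil _).trans (Nat.cast_le.mpr hM))
  have hyM : y ∈ Metric.closedBall (0 : ι → ℝ) M := by
    simpa using (le_max_right _ _).trans ((Nat.le_ceil _).trans (Nat.cast_le.mpr hM))
  refine (hZ (K ∩ Metric.closedBall 0 M) (L ∩ Metric.closedBall 0 M) ⟨x, hx, hxM⟩ ⟨y, hy, hyM⟩
    ((isCompact_closedBall _ _).inter_left hK) ((isCompact_closedBall _ _).inter_left hL)
    lam hlam).trans (measure_mono ?_)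
  exact fun ω hω => add_subset_add (smul_set_mono inter_subset_left)
    (smul_set_mono inter_subset_left) hω

theorem IsLogConcave.measureReal_abs_ge_rpow_mul_le [IsFiniteMeasure P] (hZ : IsLogConcave P Z)
    (ℓ : (ι → ℝ) →L[ℝ] ℝ) {a t : ℝ} (ha : 0 ≤ a) (ht : 1 ≤ t) :
    P.real {ω | t * a ≤ |ℓ (Z ω)|} ^ (2 / (t + 1)) *
        P.real {ω | |ℓ (Z ω)| ≤ a} ^ (1 - 2 / (t + 1)) ≤ P.real {ω | a ≤ |ℓ (Z ω)|} := by
  have ht1 : 0 < t + 1 := by linarith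
  have hlam : 2 / (t + 1) ∈ Icc (0 : ℝ) 1 := ⟨by positivity, by rw [div_le_one ht1]; linarith⟩
  rcases eq_empty_or_nonempty {x | t * a ≤ |ℓ x|} with hK | hK
  · have : {ω | t * a ≤ |ℓ (Z ω)|} = ∅ := by
      ext ω; simpa using fun h : t * a ≤ |ℓ (Z ω)| => hK.subset h
    rw [this, measureReal_empty, Real.zero_rpow (div_pos two_pos ht1).ne', zero_mul]
    exact measureReal_nonneg
  have hle := hZ.le_measure_smul_add_smul_of_isClosed
    (isClosed_le continuous_const ℓ.continuous.abs) (isClosed_le ℓ.continuous.abs continuous_const)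
    hK ⟨0, by simpa using ha⟩ hlam
  have hsub : P {ω | Z ω ∈ (2 / (t + 1)) • {x | t * a ≤ |ℓ x|} + (1 - 2 / (t + 1)) • {x | |ℓ x| ≤ a}}
      ≤ P {ω | a ≤ |ℓ (Z ω)|} :=
    measure_mono fun ω hω => smul_add_smul_subset_abs_ge ℓ.toLinearMap ht hω
  refine (ENNReal.toReal_mono (measure_ne_top _ _) (hle.trans hsub)).trans' (le_of_eq ?_)
  rw [ENNReal.toReal_mul, ← ENNReal.toReal_rpow, ← ENNReal.toReal_rpow]
  rfl

theorem IsLogConcave.measureReal_abs_ge_mul_le_exp [IsProbabilityMeasure P]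
    (hZ : IsLogConcave P Z) (ℓ : (ι → ℝ) →L[ℝ] ℝ) {σ : ℝ} (hσ : 0 < σ)
    (hint : Integrable (fun ω => ℓ (Z ω) ^ 2) P) (hvar : ∫ ω, ℓ (Z ω) ^ 2 ∂P ≤ σ ^ 2) {t : ℝ}
    (ht : 1 ≤ t) : P.real {ω | t * (2 * σ) ≤ |ℓ (Z ω)|} ≤ exp (-((t + 1) / 2)) := by
  have hfar : P.real {ω | 2 * σ ≤ |ℓ (Z ω)|} ≤ 1 / 4 := by
    refine (measureReal_le_integral_sq_div_sq hint (by positivity)).trans ?_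
    rw [div_le_iff₀ (by positivity)]
    nlinarith
  have hnear : 3 / 4 ≤ P.real {ω | |ℓ (Z ω)| ≤ 2 * σ} := by
    have : 1 ≤ P.real {ω | 2 * σ ≤ |ℓ (Z ω)|} + P.real {ω | |ℓ (Z ω)| ≤ 2 * σ} := by
      rw [← probReal_univ (μ := P)]
      refine (measureReal_mono ?_).trans (measureReal_union_le _ _)
      exact fun ω _ => le_total (2 * σ) |ℓ (Z ω)|
    linarith
  have hborell := hZ.measureReal_abs_ge_rpow_mul_le ℓ (by positivity : 0 ≤ 2 * σ) ht
  set lam := 2 / (t + 1) with hlam_def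
  have hlam : 0 < lam := by positivity
  set x := P.real {ω | t * (2 * σ) ≤ |ℓ (Z ω)|}
  have hx_lam : x ^ lam ≤ exp (-1) := by
    have hnear' : 3 / 4 ≤ P.real {ω | |ℓ (Z ω)| ≤ 2 * σ} ^ (1 - lam) :=
      hnear.trans (Real.self_le_rpow_of_le_one measureReal_nonneg measureReal_le_one
        (by linarith))
    have : x ^ lam * (3 / 4) ≤ 1 / 4 :=
      (mul_le_mul_of_nonneg_left hnear' (by positivity)).trans (hborell.trans hfar)
    have := Real.exp_neg_one_gt_d9
    linarith
  calc x = (x ^ lam) ^ lam⁻¹ := (Real.rpow_rpow_inv measureReal_nonneg hlam.ne').symm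
    _ ≤ exp (-1) ^ lam⁻¹ := by gcongr
    _ = exp (-((t + 1) / 2)) := by rw [← Real.exp_mul, hlam_def]; congr 1; field_simp

theorem IsLogConcave.measureReal_abs_ge_le_exp [IsProbabilityMeasure P] (hZ : IsLogConcave P Z)
    (ℓ : (ι → ℝ) →L[ℝ] ℝ) {σ : ℝ} (hσ : 0 < σ) (hint : Integrable (fun ω => ℓ (Z ω) ^ 2) P)
    (hvar : ∫ ω, ℓ (Z ω) ^ 2 ∂P ≤ σ ^ 2) (u : ℝ) :
    P.real {ω | u ≤ |ℓ (Z ω)|} ≤ exp (1 / 2 - u / (4 * σ)) := by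
  rcases le_or_gt u (2 * σ) with hu | hu
  · calc P.real {ω | u ≤ |ℓ (Z ω)|} ≤ exp 0 := exp_zero ▸ measureReal_le_one
      _ ≤ exp (1 / 2 - u / (4 * σ)) := by
          gcongr
          rw [sub_nonneg, div_le_iff₀ (by positivity)]
          linarith
  have ht : 1 ≤ u / (2 * σ) := by rw [le_div_iff₀ (by positivity)]; linarith
  have htail := hZ.measureReal_abs_ge_mul_le_exp ℓ hσ hint hvar ht
  rw [div_mul_cancel₀ u (by positivity)] at htail
  refine htail.trans (exp_le_exp.mpr ?_)
  have : u / (4 * σ) = u / (2 * σ) / 2 := by field_simp; ring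
  linarith

theorem IsLogConcave.integral_abs_rpow_le [IsProbabilityMeasure P]
    (hZ : IsLogConcave P Z) (hZm : AEMeasurable Z P) (ℓ : (ι → ℝ) →L[ℝ] ℝ) {σ : ℝ} (hσ : 0 < σ)
    (hint : Integrable (fun ω => ℓ (Z ω) ^ 2) P) (hvar : ∫ ω, ℓ (Z ω) ^ 2 ∂P ≤ σ ^ 2)
    {q : ℝ} (hq : 1 ≤ q) : ∫ ω, |ℓ (Z ω)| ^ q ∂P ≤ (16 * q * σ) ^ q := by
  have htail : ∀ u > 0, P.real {ω | u ≤ |ℓ (Z ω)|} ≤ exp (1 / 2) * exp (-(1 / (4 * σ) * u)) :=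
    fun u _ => by
      rw [← exp_add]
      convert hZ.measureReal_abs_ge_le_exp ℓ hσ hint hvar u using 2
      ring
  have hhalf : exp (1 / 2) ≤ 2 := by
    rw [Real.exp_half, Real.sqrt_le_iff]
    exact ⟨by norm_num, by nlinarith [Real.exp_one_lt_d9]⟩
  calc ∫ ω, |ℓ (Z ω)| ^ q ∂P ≤ exp (1 / 2) * (2 * q / (1 / (4 * σ))) ^ q :=
        integral_abs_rpow_le_of_measureReal_le_exp
          (ℓ.continuous.measurable.comp_aemeasurable hZm) (exp_pos _).le (by positivity) hq htail
    _ ≤ 2 ^ q * (8 * q * σ) ^ q := by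
        rw [show 2 * q / (1 / (4 * σ)) = 8 * q * σ by field_simp; ring]
        gcongr
        exact hhalf.trans (Real.self_le_rpow_of_one_le one_le_two hq)
    _ = (16 * q * σ) ^ q := by
        rw [← Real.mul_rpow (by norm_num) (by positivity)]
        ring_nf

end LogConcave

section Isotropic

variable {Ω ι : Type*} [MeasurableSpace Ω] [DecidableEq ι] {P : Measure Ω} {Z : Ω → ι → ℝ}

theorem memLp_two_apply_of_integral_mul_self (hZm : AEMeasurable Z P)
    (hcov : ∀ i j, ∫ ω, Z ω i * Z ω j ∂P = if i = j then 1 else 0) (j : ι) :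
    MemLp (fun ω => Z ω j) 2 P := by
  refine (memLp_two_iff_integrable_sq
    ((measurable_pi_apply j).comp_aemeasurable hZm).aestronglyMeasurable).mpr ?_
  exact Integrable.of_integral_ne_zero (by simp [sq, hcov])

theorem integral_sq_sum_mul [Fintype ι] (hZm : AEMeasurable Z P)
    (hcov : ∀ i j, ∫ ω, Z ω i * Z ω j ∂P = if i = j then 1 else 0) (s : ι → ℝ) :
    ∫ ω, (∑ j, s j * Z ω j) ^ 2 ∂P = ∑ j, s j ^ 2 := by
  have hL2 := memLp_two_apply_of_integral_mul_self hZm hcov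
  have hint : ∀ j k, Integrable (fun ω => s j * s k * (Z ω j * Z ω k)) P :=
    fun j k => ((hL2 j).integrable_mul (hL2 k)).const_mul _
  have hexp : ∀ ω, (∑ j, s j * Z ω j) ^ 2 = ∑ j, ∑ k, s j * s k * (Z ω j * Z ω k) := fun ω => by
    rw [sq, Finset.sum_mul_sum]
    exact Finset.sum_congr rfl fun j _ => Finset.sum_congr rfl fun k _ => by ring
  simp_rw [hexp]
  rw [integral_finsetSum _ fun j _ => integrable_finsetSum _ fun k _ => hint j k]
  simp_rw [integral_finsetSum _ fun k _ => hint _ k, integral_const_mul, hcov]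
  simp [sq]

theorem IsLogConcave.integral_abs_sum_mul_rpow_le [Fintype ι] [IsProbabilityMeasure P]
    (hZ : IsLogConcave P Z) (hZm : AEMeasurable Z P)
    (hcov : ∀ i j, ∫ ω, Z ω i * Z ω j ∂P = if i = j then 1 else 0) (s : ι → ℝ) {q : ℝ}
    (hq : 1 ≤ q) :
    ∫ ω, |∑ j, s j * Z ω j| ^ q ∂P ≤ (16 * q) ^ q * (∑ j, s j ^ 2) ^ (q / 2) := by
  have hq0 : 0 < q := by linarith
  rcases (Finset.sum_nonneg fun j _ => sq_nonneg (s j)).eq_or_lt with hs | hs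
  · have hs0 : ∀ j, s j = 0 := fun j => pow_eq_zero_iff two_ne_zero |>.mp
      ((Finset.sum_eq_zero_iff_of_nonneg fun j _ => sq_nonneg (s j)).mp hs.symm j
        (Finset.mem_univ j))
    simp only [hs0, zero_mul, Finset.sum_const_zero, abs_zero, Real.zero_rpow hq0.ne',
      integral_zero]
    positivity
  set ℓ : (ι → ℝ) →L[ℝ] ℝ := ∑ j, s j • ContinuousLinearMap.proj j
  have hℓ : ∀ x, ℓ x = ∑ j, s j * x j := fun x => by simp [ℓ]
  have hL2 := memLp_two_apply_of_integral_mul_self hZm hcov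
  have hint : Integrable (fun ω => ℓ (Z ω) ^ 2) P := by
    simp_rw [hℓ]
    exact (memLp_finsetSum _ fun j _ => (hL2 j).const_mul (s j)).integrable_sq
  have hvar : ∫ ω, ℓ (Z ω) ^ 2 ∂P ≤ √(∑ j, s j ^ 2) ^ 2 := by
    simp_rw [hℓ]
    rw [integral_sq_sum_mul hZm hcov, Real.sq_sqrt hs.le]
  have hmoment := hZ.integral_abs_rpow_le hZm ℓ (Real.sqrt_pos.mpr hs) hint hvar hq
  simp_rw [hℓ] at hmoment
  rwa [Real.mul_rpow (by positivity) (Real.sqrt_nonneg _), Real.sqrt_eq_rpow,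
    ← Real.rpow_mul hs.le, one_div_mul_eq_div] at hmoment

theorem IsLogConcave.integral_abs_sum_mul_mul_rpow_le [Fintype ι] [IsProbabilityMeasure P]
    (hZ : IsLogConcave P Z) (hZm : AEMeasurable Z P)
    (hcov : ∀ i j, ∫ ω, Z ω i * Z ω j ∂P = if i = j then 1 else 0) (a : ι → ℝ) {t : ι → ℝ}
    (ht : ∑ j, t j ^ 2 ≤ 1) {q : ℝ} (hq : 2 ≤ q) :
    ∫ ω, |∑ j, a j * Z ω j * t j| ^ q ∂P ≤ (16 * q) ^ q * ∑ j, t j ^ 2 * |a j| ^ q := by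
  have hjensen : (∑ j, (a j * t j) ^ 2) ^ (q / 2) ≤ ∑ j, t j ^ 2 * |a j| ^ q := by
    have hpow : ∀ j, |a j| ^ q = (a j ^ 2) ^ (q / 2) := fun j => by
      rw [← sq_abs, ← Real.rpow_natCast, ← Real.rpow_mul (abs_nonneg _)]
      norm_num [mul_div_cancel₀]
    simp_rw [hpow, mul_pow, mul_comm (a _ ^ 2)]
    exact Real.rpow_sum_mul_le_sum_mul_rpow _ (fun j => sq_nonneg (t j))
      (fun j => sq_nonneg (a j)) ht (by linarith)
  simp_rw [mul_right_comm (a _) (Z _ _)]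
  exact (hZ.integral_abs_sum_mul_rpow_le hZm hcov _ (by linarith)).trans (by gcongr)

end Isotropic

theorem statement9 :
    ∃ C : ℝ, 0 < C ∧
      ∀ (m n : ℕ) (Ω : Type) [MeasurableSpace Ω] (P : Measure Ω), IsProbabilityMeasure P →
      ∀ Y : Fin m → Ω → (Fin n → ℝ),
        (∀ i, Measurable (Y i)) →
        iIndepFun Y P →
        (∀ i j, IdentDistrib (Y i) (Y j) P P) →
        (∀ i, IsLogConcave P (Y i)) →
        (∀ i, IsIsotropic P (Y i)) →
      ∀ A : Fin m → Fin n → ℝ,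
      ∀ p q p' : ℝ, 2 ≤ p → 2 ≤ q → 1 / p + 1 / p' = 1 →
      ∀ t : Fin n → ℝ, pNorm p' t ≤ 1 →
        (∑ i, ∫ ω, |∑ j, A i j * Y i ω j * t j| ^ q ∂P) ^ (1 / q) ≤
          C * q * ⨆ j, pNorm q (fun i => A i j) := by
  refine ⟨16, by norm_num, ?_⟩
  intro m n Ω _ P _ Y hYm _ _ hlc hiso A p q p' hp hq hpp' t ht
  have hq0 : 0 < q := by linarith
  obtain ⟨hp'0, hp'2⟩ := pos_and_le_two_of_one_div_add_one_div_eq_one hp hpp'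
  have ht2 : ∑ j, t j ^ 2 ≤ 1 := sum_sq_le_one_of_pNorm_le_one hp'0 hp'2 ht
  have hS : 0 ≤ ⨆ j, pNorm q fun i => A i j := Real.iSup_nonneg fun j => pNorm_nonneg _ _
  have hrows : ∑ i, ∫ ω, |∑ j, A i j * Y i ω j * t j| ^ q ∂P ≤
      (16 * q) ^ q * (⨆ j, pNorm q fun i => A i j) ^ q :=
    calc ∑ i, ∫ ω, |∑ j, A i j * Y i ω j * t j| ^ q ∂P
        ≤ ∑ i, (16 * q) ^ q * ∑ j, t j ^ 2 * |A i j| ^ q := Finset.sum_le_sum fun i _ =>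
          (hlc i).integral_abs_sum_mul_mul_rpow_le (hYm i).aemeasurable (hiso i).2 (A i) ht2 hq
      _ ≤ (16 * q) ^ q * (⨆ j, pNorm q fun i => A i j) ^ q := by
          rw [← Finset.mul_sum]
          gcongr
          exact sum_sum_sq_mul_abs_rpow_le_iSup_pNorm_rpow A ht2 hq0
  calc (∑ i, ∫ ω, |∑ j, A i j * Y i ω j * t j| ^ q ∂P) ^ (1 / q)
      ≤ ((16 * q) ^ q * (⨆ j, pNorm q fun i => A i j) ^ q) ^ (1 / q) := by gcongr
    _ = 16 * q * ⨆ j, pNorm q fun i => A i j := by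
        rw [← Real.mul_rpow (by positivity) hS, one_div,
          Real.rpow_rpow_inv (mul_nonneg (by positivity) hS) hq0.ne']

end
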